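/- Fix k ≥ 2, parameters ρ, ρ′, α, β, λ > 0, and rejection threshold h = 0. For every predictor f : X → ℝ^k, every confidence function g : X → ℝ, and every example (x,y) ∈ X × {1,…,k}, the Max Hinge margin loss is a pointwise upper bound on the selective classification loss: L₀(f,g,x,y) ≤ L_MH^{ρ,ρ′}(f,g,x,y). -/
import Mathlib

open scoped BigOperators

/-- The margin of predictor `f` at input `x` with true label `y`:
`γ(x) = f_y(x) − max_{j ≠ y} f_j(x)`. -/
noncomputable def margin {X : Type*} {k : ℕ} (f : X → Fin k → ℝ) (y : Fin k) (x : X) : ℝ :=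
  f x y - ⨆ j : {j : Fin k // j ≠ y}, f x j

/-- The selective classification loss
`L₀(f,g,x,y) = 1[γ(x) ≤ 0]·1[g(x) ≥ h] + λ·1[g(x) < h]`. -/
noncomputable def selLoss {X : Type*} {k : ℕ} (f : X → Fin k → ℝ) (g : X → ℝ)
    (h lam : ℝ) (x : X) (y : Fin k) : ℝ :=
  (if margin f y x ≤ 0 then (1 : ℝ) else 0) * (if h ≤ g x then (1 : ℝ) else 0)
    + lam * (if g x < h then (1 : ℝ) else 0)

/-- The Max Hinge margin loss
`L_MH^{ρ,ρ′}(f,g,x,y) = max{max{1 + (α/2)(g(x)/ρ′ − γ(x)/ρ), 0}, max{λ(1 − β g(x)/ρ′), 0}}`. -/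
noncomputable def maxHinge {X : Type*} {k : ℕ} (f : X → Fin k → ℝ) (g : X → ℝ)
    (ρ ρ' α β lam : ℝ) (x : X) (y : Fin k) : ℝ :=
  max (max (1 + α / 2 * (g x / ρ' - margin f y x / ρ)) 0)
      (max (lam * (1 - β * g x / ρ')) 0)

/-- For `k ≥ 2`, positive parameters `ρ, ρ′, α, β, λ` and rejection
threshold `h = 0`, the Max Hinge margin loss is a pointwise upper bound on the selective
classification loss: `L₀(f,g,x,y) ≤ L_MH^{ρ,ρ′}(f,g,x,y)`. -/
theorem maxHinge_upper_bound {X : Type*} {k : ℕ} (hk : 2 ≤ k)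
    (ρ ρ' α β lam : ℝ) (hρ : 0 < ρ) (hρ' : 0 < ρ') (hα : 0 < α) (hβ : 0 < β)
    (hlam : 0 < lam)
    (f : X → Fin k → ℝ) (g : X → ℝ) (x : X) (y : Fin k) :
    selLoss f g (0 : ℝ) lam x y ≤ maxHinge f g ρ ρ' α β lam x y := by
  unfold selLoss maxHinge
  by_cases hg : g x < 0
  · have hg' : ¬ (0 : ℝ) ≤ g x := not_le.2 hg
    simp only [hg, hg', if_true, if_false, mul_zero, mul_one, zero_add]
    have h1 : lam ≤ lam * (1 - β * g x / ρ') := by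
      have : β * g x / ρ' ≤ 0 := by
        apply div_nonpos_of_nonpos_of_nonneg _ hρ'.le
        exact mul_nonpos_of_nonneg_of_nonpos hβ.le hg.le
      nlinarith
    exact le_max_of_le_right (le_max_of_le_left h1)
  · have hg' : (0 : ℝ) ≤ g x := not_lt.1 hg
    simp only [hg, hg', if_true, if_false, mul_zero, mul_one, add_zero]
    by_cases hm : margin f y x ≤ 0
    · simp only [hm, if_true]
      have h1 : (1 : ℝ) ≤ 1 + α / 2 * (g x / ρ' - margin f y x / ρ) := by
        have h2 : 0 ≤ g x / ρ' := by positivity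
        have h3 : margin f y x / ρ ≤ 0 := div_nonpos_of_nonpos_of_nonneg hm hρ.le
        nlinarith
      exact le_max_of_le_left (le_max_of_le_left h1)
    · simp only [hm, if_false]
      exact le_max_of_le_left (le_max_right _ _)
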